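/- The set j ∗ S_G = {j ∗ f : f ∈ S_G} is a minimal two-sided ideal of the monoid (S_G, ∗). -/
import Mathlib


/-- A groupoid in the sense of Hahn: a set with a partially defined product,
an inverse map, and a composability relation. -/
structure GroupoidStr (G : Type*) where
  mul : G → G → G
  inv : G → G
  comp : G → G → Prop
  inv_inv : ∀ x, inv (inv x) = x
  comp_mul_left : ∀ {x y z}, comp x y → comp y z → comp (mul x y) z
  comp_mul_right : ∀ {x y z}, comp x y → comp y z → comp x (mul y z)
  mul_assoc : ∀ {x y z}, comp x y → comp y z → mul (mul x y) z = mul x (mul y z)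
  comp_inv_left : ∀ x, comp (inv x) x
  comp_inv_right : ∀ x, comp x (inv x)
  inv_mul_cancel : ∀ {x y}, comp x y → mul (inv x) (mul x y) = y
  mul_inv_cancel : ∀ {z x}, comp z x → mul (mul z x) (inv x) = z
  /-- `(x, y)` is composable iff `d x = r y`. -/
  comp_iff : ∀ x y, comp x y ↔ mul (inv x) x = mul y (inv y)

namespace GroupoidStr

variable {G : Type*} (𝔾 : GroupoidStr G)

/-- The range map `r x = x * x⁻¹`. -/
def r (x : G) : G := 𝔾.mul x (𝔾.inv x)

/-- The domain map `d x = x⁻¹ * x`. -/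
def d (x : G) : G := 𝔾.mul (𝔾.inv x) x

/-- The set `S_G` of maps `f : G → G` with `d (f x) = r x`. -/
def SG : Set (G → G) := {f | ∀ x, 𝔾.d (f x) = 𝔾.r x}

/-- The set `S'_G` of maps `h : G → G` with `r (h x) = d x`. -/
def SG' : Set (G → G) := {h | ∀ x, 𝔾.r (h x) = 𝔾.d x}

/-- The operation `(f ∗ g) x = g (f x · x) · f x` on `S_G`. -/
def star (f g : G → G) : G → G := fun x => 𝔾.mul (g (𝔾.mul (f x) x)) (f x)

/-- The operation `(h ⋆ k) x = h x · k (x · h x)` on `S'_G`. -/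
def star' (h k : G → G) : G → G := fun x => 𝔾.mul (h x) (k (𝔾.mul x (h x)))

/-- The map `f ↦ f*`, `f* x = (f x⁻¹)⁻¹`. -/
def dagger (f : G → G) : G → G := fun x => 𝔾.inv (f (𝔾.inv x))

/-- `L_φ x = φ x · x`. -/
def L (φ : G → G) : G → G := fun x => 𝔾.mul (φ x) x

/-- `R_ψ x = x · ψ x`. -/
def R (ψ : G → G) : G → G := fun x => 𝔾.mul x (ψ x)

end GroupoidStr

open GroupoidStr

namespace GroupoidStr

variable {G : Type*} (𝔾 : GroupoidStr G)

lemma d_inv (x : G) : 𝔾.d (𝔾.inv x) = 𝔾.r x := by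
  simp [d, r, 𝔾.inv_inv]

lemma r_inv (x : G) : 𝔾.r (𝔾.inv x) = 𝔾.d x := by
  simp [d, r, 𝔾.inv_inv]

lemma comp_of_dr {x y : G} (h : 𝔾.d x = 𝔾.r y) : 𝔾.comp x y :=
  (𝔾.comp_iff x y).mpr h

lemma dr_of_comp {x y : G} (h : 𝔾.comp x y) : 𝔾.d x = 𝔾.r y :=
  (𝔾.comp_iff x y).mp h

lemma r_mul {a x : G} (h : 𝔾.comp a x) : 𝔾.r (𝔾.mul a x) = 𝔾.r a := by
  have h1 : 𝔾.comp (𝔾.inv a) (𝔾.mul a x) :=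
    𝔾.comp_mul_right (𝔾.comp_inv_left a) h
  have := 𝔾.dr_of_comp h1
  rw [𝔾.d_inv] at this
  exact this.symm

lemma d_mul {a x : G} (h : 𝔾.comp a x) : 𝔾.d (𝔾.mul a x) = 𝔾.d x := by
  have h1 : 𝔾.comp (𝔾.mul a x) (𝔾.inv x) :=
    𝔾.comp_mul_left h (𝔾.comp_inv_right x)
  have := 𝔾.dr_of_comp h1
  rw [𝔾.r_inv] at this
  exact this

lemma mul_r (x : G) : 𝔾.mul (𝔾.inv x) (𝔾.r x) = 𝔾.inv x :=
  𝔾.inv_mul_cancel (𝔾.comp_inv_right x)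

lemma inv_mul {a x : G} (h : 𝔾.comp a x) :
    𝔾.inv (𝔾.mul a x) = 𝔾.mul (𝔾.inv x) (𝔾.inv a) := by
  set m := 𝔾.mul a x with hm
  have c1 : 𝔾.comp m (𝔾.inv x) := 𝔾.comp_mul_left h (𝔾.comp_inv_right x)
  have c2 : 𝔾.comp (𝔾.inv x) (𝔾.inv a) := by
    apply 𝔾.comp_of_dr
    rw [𝔾.d_inv, 𝔾.r_inv]
    exact (𝔾.dr_of_comp h).symm
  have cmu : 𝔾.comp m (𝔾.mul (𝔾.inv x) (𝔾.inv a)) := 𝔾.comp_mul_right c1 c2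
  have key : 𝔾.mul m (𝔾.mul (𝔾.inv x) (𝔾.inv a)) = 𝔾.mul m (𝔾.inv m) := by
    rw [← 𝔾.mul_assoc c1 c2, 𝔾.mul_inv_cancel h]
    show 𝔾.r a = 𝔾.r m
    exact (𝔾.r_mul h).symm
  have h1 := 𝔾.inv_mul_cancel cmu
  rw [key] at h1
  rw [← h1]
  exact (𝔾.inv_mul_cancel (𝔾.comp_inv_right m)).symm

lemma comp_fx {f : G → G} (hf : f ∈ 𝔾.SG) (x : G) : 𝔾.comp (f x) x :=
  𝔾.comp_of_dr (hf x)

lemma inv_mem_SG : 𝔾.inv ∈ 𝔾.SG := fun x => 𝔾.d_inv x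

lemma star_mem_SG {f g : G → G} (hf : f ∈ 𝔾.SG) (hg : g ∈ 𝔾.SG) :
    𝔾.star f g ∈ 𝔾.SG := by
  intro x
  have ha : 𝔾.comp (f x) x := 𝔾.comp_fx hf x
  have hd : 𝔾.d (g (𝔾.mul (f x) x)) = 𝔾.r (f x) := by
    rw [hg (𝔾.mul (f x) x), 𝔾.r_mul ha]
  have hc : 𝔾.comp (g (𝔾.mul (f x) x)) (f x) := 𝔾.comp_of_dr hd
  show 𝔾.d (𝔾.mul (g (𝔾.mul (f x) x)) (f x)) = 𝔾.r x
  rw [𝔾.d_mul hc, hf x]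

lemma star_inv_right {f : G → G} (hf : f ∈ 𝔾.SG) : 𝔾.star f 𝔾.inv = 𝔾.inv := by
  funext x
  have ha : 𝔾.comp (f x) x := 𝔾.comp_fx hf x
  show 𝔾.mul (𝔾.inv (𝔾.mul (f x) x)) (f x) = 𝔾.inv x
  rw [𝔾.inv_mul ha]
  have c1 : 𝔾.comp (𝔾.inv x) (𝔾.inv (f x)) := by
    apply 𝔾.comp_of_dr
    rw [𝔾.d_inv, 𝔾.r_inv]
    exact (𝔾.dr_of_comp ha).symm
  rw [𝔾.mul_assoc c1 (𝔾.comp_inv_left (f x))]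
  show 𝔾.mul (𝔾.inv x) (𝔾.d (f x)) = 𝔾.inv x
  rw [hf x]
  exact 𝔾.mul_r x

lemma star_assoc {f g h : G → G} (hf : f ∈ 𝔾.SG) (hg : g ∈ 𝔾.SG)
    (hh : h ∈ 𝔾.SG) : 𝔾.star (𝔾.star f g) h = 𝔾.star f (𝔾.star g h) := by
  funext x
  set a := f x with ha
  have ca : 𝔾.comp a x := 𝔾.comp_fx hf x
  set b := g (𝔾.mul a x) with hb
  have cb : 𝔾.comp b a := by
    apply 𝔾.comp_of_dr
    rw [hb, hg (𝔾.mul a x), 𝔾.r_mul ca]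
  have hba : 𝔾.mul (𝔾.mul b a) x = 𝔾.mul b (𝔾.mul a x) := 𝔾.mul_assoc cb ca
  set c := h (𝔾.mul b (𝔾.mul a x)) with hc
  have cbax : 𝔾.comp b (𝔾.mul a x) := 𝔾.comp_of_dr (by rw [hb, hg])
  have cc : 𝔾.comp c b := by
    apply 𝔾.comp_of_dr
    rw [hc, hh (𝔾.mul b (𝔾.mul a x)), 𝔾.r_mul cbax]
  show 𝔾.mul (h (𝔾.mul (𝔾.mul b a) x)) (𝔾.mul b a)
      = 𝔾.mul (𝔾.mul c b) a
  rw [hba, ← hc]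
  exact (𝔾.mul_assoc cc cb).symm

end GroupoidStr

theorem stmt7 {G : Type*} (𝔾 : GroupoidStr G) :
    (𝔾.star 𝔾.inv '' 𝔾.SG) ⊆ 𝔾.SG ∧
    (𝔾.star 𝔾.inv '' 𝔾.SG).Nonempty ∧
    (∀ f ∈ 𝔾.SG, ∀ g ∈ 𝔾.star 𝔾.inv '' 𝔾.SG,
      𝔾.star f g ∈ 𝔾.star 𝔾.inv '' 𝔾.SG ∧ 𝔾.star g f ∈ 𝔾.star 𝔾.inv '' 𝔾.SG) ∧
    (∀ I : Set (G → G), I ⊆ 𝔾.SG → I.Nonempty →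
      (∀ f ∈ 𝔾.SG, ∀ g ∈ I, 𝔾.star f g ∈ I ∧ 𝔾.star g f ∈ I) →
      I ⊆ 𝔾.star 𝔾.inv '' 𝔾.SG → I = 𝔾.star 𝔾.inv '' 𝔾.SG) := by
  have hinv := 𝔾.inv_mem_SG
  refine ⟨?_, ⟨𝔾.star 𝔾.inv 𝔾.inv, ⟨𝔾.inv, hinv, rfl⟩⟩, ?_, ?_⟩
  · rintro _ ⟨h, hh, rfl⟩
    exact 𝔾.star_mem_SG hinv hh
  · rintro f hf _ ⟨h, hh, rfl⟩
    constructor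
    · refine ⟨h, hh, ?_⟩
      rw [← 𝔾.star_assoc hf hinv hh, 𝔾.star_inv_right hf]
    · refine ⟨𝔾.star h f, 𝔾.star_mem_SG hh hf, ?_⟩
      exact (𝔾.star_assoc hinv hh hf).symm
  · intro I hIsub ⟨g, hg⟩ hIdeal hIsub'
    have hgSG : g ∈ 𝔾.SG := hIsub hg
    have hjI : 𝔾.inv ∈ I := by
      have := (hIdeal 𝔾.inv hinv g hg).2
      rwa [𝔾.star_inv_right hgSG] at this
    apply Set.Subset.antisymm hIsub'
    rintro _ ⟨h, hh, rfl⟩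
    exact (hIdeal h hh 𝔾.inv hjI).2
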